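/- arXiv:2110.01235 — 2 statements merged into one kernel-verified Lean document; each statement's English description precedes it below -/
import Mathlib

section
/- Let Ω be a family of pairs of supports and Σ_Ω the associated constraint set. If (X,Y) ∈ Σ_Ω is a PS-unique factorization of XYᵀ in Σ_Ω, then for every pair of supports (S_L, S_R) ∈ Ω with supp(X) ⊆ S_L and supp(Y) ⊆ S_R, we have colsupp(X) = colsupp(S_L) and colsupp(Y) = colsupp(S_R). -/
open Matrix

def IsGenPerm {r : ℕ} (G : Matrix (Fin r) (Fin r) ℂ) : Prop :=
  ∃ (σ : Equiv.Perm (Fin r)) (d : Fin r → ℂ),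
    (∀ i, d i ≠ 0) ∧ ∀ i j, G i j = if i = σ j then d i else 0

def PSEquiv {m n r : ℕ}
    (p q : Matrix (Fin m) (Fin r) ℂ × Matrix (Fin n) (Fin r) ℂ) : Prop :=
  ∃ G, IsGenPerm G ∧ q.1 = p.1 * G ∧ q.2 = p.2 * (G⁻¹)ᵀ

def PSUniqueSet {m n r : ℕ}
    (Sig : Set (Matrix (Fin m) (Fin r) ℂ × Matrix (Fin n) (Fin r) ℂ)) :
    Set (Matrix (Fin m) (Fin r) ℂ × Matrix (Fin n) (Fin r) ℂ) :=
  {p | p ∈ Sig ∧ ∀ q ∈ Sig, q.1 * q.2ᵀ = p.1 * p.2ᵀ → PSEquiv p q}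

/-- The support of a matrix is contained in the (binary) support `S`. -/
def SuppSub {a b : ℕ} (X : Matrix (Fin a) (Fin b) ℂ) (S : Set (Fin a × Fin b)) : Prop :=
  ∀ i j, X i j ≠ 0 → (i, j) ∈ S

/-- The column support of a matrix: indices of its nonzero columns. -/
def Colsupp {a b : ℕ} (X : Matrix (Fin a) (Fin b) ℂ) : Set (Fin b) :=
  {j | ∃ i, X i j ≠ 0}

/-- The column support of a support (set of index pairs). -/
def ColsuppS {a b : ℕ} (S : Set (Fin a × Fin b)) : Set (Fin b) :=
  {j | ∃ i, (i, j) ∈ S}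

/-- The constraint set Σ_Ω associated with a family of pairs of supports. -/
def SigmaOm {m n r : ℕ} (Om : Set (Set (Fin m × Fin r) × Set (Fin n × Fin r))) :
    Set (Matrix (Fin m) (Fin r) ℂ × Matrix (Fin n) (Fin r) ℂ) :=
  {p | ∃ S ∈ Om, SuppSub p.1 S.1 ∧ SuppSub p.2 S.2}

/-!
If column `j` of `X` vanishes although `S_L` allows an entry `(i, j)`, put the unit vector `eᵢ`
into column `j` of `X` and zero out column `j` of `Y`. The product `XYᵀ` and the support
constraints are unchanged, but the new left factor has one more nonzero column than `X`, whereas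
right multiplication by a generalized permutation matrix only permutes and rescales columns and so
preserves their number. This contradicts PS-uniqueness; the right factor is handled the same way,
since `(G⁻¹)ᵀ` is again a generalized permutation matrix.
-/

variable {a b r : ℕ}

lemma IsGenPerm.inv_transpose {G : Matrix (Fin r) (Fin r) ℂ} (hG : IsGenPerm G) :
    IsGenPerm (G⁻¹)ᵀ := by
  obtain ⟨σ, d, hd, hGσ⟩ := hG
  have hinv : G⁻¹ = of fun i j => if σ i = j then (d j)⁻¹ else 0 := by
    refine inv_eq_left_inv ?_
    ext i j
    rw [mul_apply, Finset.sum_eq_single (σ i) (fun k _ hk => by simp [Ne.symm hk]) (by simp)]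
    by_cases hij : i = j
    · subst hij; simp [hGσ, hd]
    · simp [hij, hGσ, σ.injective.ne hij]
  refine ⟨σ, fun i => (d i)⁻¹, fun i => inv_ne_zero (hd i), fun i j => ?_⟩
  simp [hinv, eq_comm]

lemma IsGenPerm.colsupp_mul_ncard {G : Matrix (Fin r) (Fin r) ℂ} (hG : IsGenPerm G)
    (Z : Matrix (Fin a) (Fin r) ℂ) : (Colsupp (Z * G)).ncard = (Colsupp Z).ncard := by
  obtain ⟨σ, d, hd, hGσ⟩ := hG
  have hcol : Colsupp (Z * G) = σ.symm '' Colsupp Z := by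
    ext j
    simp only [Colsupp, mul_apply, hGσ, mul_ite, mul_zero, Finset.sum_ite_eq', Finset.mem_univ,
      if_true, Equiv.image_symm_eq_preimage, Set.mem_preimage, Set.mem_ofPred_eq, ne_eq,
      mul_eq_zero, hd, or_false]
  rw [hcol, Set.ncard_image_of_injective _ σ.symm.injective]

lemma colsupp_updateCol_single {Z : Matrix (Fin a) (Fin r) ℂ} {j : Fin r} (i : Fin a)
    (hj : j ∉ Colsupp Z) : Colsupp (updateCol Z j (Pi.single i 1)) = insert j (Colsupp Z) := by
  ext k
  by_cases hk : k = j
  · subst hk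
    simpa [Colsupp] using ⟨i, by simp⟩
  · simp [Colsupp, hk]

lemma SuppSub.updateCol {Z : Matrix (Fin a) (Fin b) ℂ} {S : Set (Fin a × Fin b)}
    (hZ : SuppSub Z S) {j : Fin b} {v : Fin a → ℂ} (hv : ∀ i, v i ≠ 0 → (i, j) ∈ S) :
    SuppSub (updateCol Z j v) S := by
  intro i k hik
  by_cases hk : k = j
  · subst hk
    exact hv i (by simpa using hik)
  · exact hZ i k (by simpa [hk] using hik)

lemma SuppSub.updateCol_single {Z : Matrix (Fin a) (Fin b) ℂ} {S : Set (Fin a × Fin b)}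
    (hZ : SuppSub Z S) {i : Fin a} {j : Fin b} (hij : (i, j) ∈ S) :
    SuppSub (Matrix.updateCol Z j (Pi.single i 1)) S :=
  hZ.updateCol fun p hp => by
    obtain rfl : p = i := by
      by_contra hpi
      simp [hpi] at hp
    exact hij

lemma updateCol_mul_updateCol_zero_transpose {m n : ℕ} {X : Matrix (Fin m) (Fin r) ℂ}
    {Y : Matrix (Fin n) (Fin r) ℂ} {j : Fin r} (hX : j ∉ Colsupp X) (u : Fin m → ℂ) :
    updateCol X j u * (updateCol Y j 0)ᵀ = X * Yᵀ := by
  have hXj : ∀ p, X p j = 0 := by simpa [Colsupp] using hX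
  ext p q
  simp only [mul_apply, transpose_apply]
  refine Finset.sum_congr rfl fun k _ => ?_
  by_cases hk : k = j
  · simp [hk, hXj]
  · simp [hk]

lemma colsupp_eq_colsuppS {Z : Matrix (Fin a) (Fin r) ℂ} {S : Set (Fin a × Fin r)}
    (hZ : SuppSub Z S)
    (h : ∀ j ∉ Colsupp Z, ∀ i, (i, j) ∈ S →
      ∃ G, IsGenPerm G ∧ updateCol Z j (Pi.single i 1) = Z * G) :
    Colsupp Z = ColsuppS S := by
  refine Set.Subset.antisymm (fun j ⟨i, hij⟩ => ⟨i, hZ i j hij⟩) fun j ⟨i, hij⟩ => ?_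
  by_contra hj
  obtain ⟨G, hG, hZG⟩ := h j hj i hij
  have hcard : (Colsupp (updateCol Z j (Pi.single i 1))).ncard = (Colsupp Z).ncard := by
    rw [hZG]
    exact hG.colsupp_mul_ncard Z
  rw [colsupp_updateCol_single i hj, Set.ncard_insert_of_notMem hj] at hcard
  omega

theorem stmt4 {m n r : ℕ} (Om : Set (Set (Fin m × Fin r) × Set (Fin n × Fin r)))
    (X : Matrix (Fin m) (Fin r) ℂ) (Y : Matrix (Fin n) (Fin r) ℂ)
    (h : (X, Y) ∈ PSUniqueSet (SigmaOm Om)) :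
    ∀ S ∈ Om, SuppSub X S.1 → SuppSub Y S.2 →
      Colsupp X = ColsuppS S.1 ∧ Colsupp Y = ColsuppS S.2 := by
  intro S hS hX hY
  constructor
  · refine colsupp_eq_colsuppS hX fun j hj i hij => ?_
    obtain ⟨G, hG, hXG, -⟩ := h.2 (updateCol X j (Pi.single i 1), updateCol Y j 0)
      ⟨S, hS, hX.updateCol_single hij, hY.updateCol (by simp)⟩
      (updateCol_mul_updateCol_zero_transpose hj _)
    exact ⟨G, hG, hXG⟩
  · refine colsupp_eq_colsuppS hY fun j hj i hij => ?_
    obtain ⟨G, hG, -, hYG⟩ := h.2 (updateCol X j 0, updateCol Y j (Pi.single i 1))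
      ⟨S, hS, hX.updateCol (by simp), hY.updateCol_single hij⟩
      (by rw [← transpose_transpose (X * Yᵀ), transpose_mul, transpose_transpose,
        ← updateCol_mul_updateCol_zero_transpose hj, transpose_mul, transpose_transpose])
    exact ⟨(G⁻¹)ᵀ, hG.inv_transpose, hYG⟩
end

section
/- Let X be an m×r matrix and Θ a family of n×r binary support matrices. If (X,Y) is the PS-unique factorization of XYᵀ in {X} × Σ_Θ (where Σ_Θ is the union over S ∈ Θ of the fixed-support model sets), then colsupp(Y) ⊆ colsupp(X). -/
open Matrix

/-- The constraint set Σ_Θ for a family of right supports. -/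
def SigmaTh {n r : ℕ} (Th : Set (Set (Fin n × Fin r))) :
    Set (Matrix (Fin n) (Fin r) ℂ) :=
  {Y | ∃ S ∈ Th, SuppSub Y S}

namespace IsGenPerm

variable {r : ℕ} {G : Matrix (Fin r) (Fin r) ℂ}

theorem inv (hG : IsGenPerm G) : IsGenPerm G⁻¹ := by
  obtain ⟨σ, d, hd, hGij⟩ := hG
  refine ⟨σ⁻¹, fun i => (d (σ i))⁻¹, fun i => inv_ne_zero (hd _), fun i j => ?_⟩
  suffices hinv : G⁻¹ = Matrix.of fun i j => if i = σ⁻¹ j then (d (σ i))⁻¹ else 0 by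
    rw [hinv, Matrix.of_apply]
  refine Matrix.inv_eq_left_inv (Matrix.ext fun i k => ?_)
  simp only [Matrix.mul_apply, Matrix.of_apply, hGij, Matrix.one_apply, ite_mul, zero_mul,
    mul_ite, mul_zero, Equiv.Perm.eq_inv_iff_eq]
  rw [Finset.sum_eq_single (σ i) (fun b _ hb => by simp [Ne.symm hb]) (by simp)]
  by_cases hik : i = k
  · simp [hik, hd]
  · simp [hik, σ.injective.ne hik]

theorem ncard_colsupp_mul_transpose (hG : IsGenPerm G) {n : ℕ} (Y : Matrix (Fin n) (Fin r) ℂ) :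
    (Colsupp (Y * Gᵀ)).ncard = (Colsupp Y).ncard := by
  obtain ⟨σ, d, hd, hGij⟩ := hG
  have hentry : ∀ a i, (Y * Gᵀ) a i = Y a (σ.symm i) * d i := fun a i => by
    simp only [Matrix.mul_apply, Matrix.transpose_apply, hGij, mul_ite, mul_zero,
      ← Equiv.symm_apply_eq, Finset.sum_ite_eq, Finset.mem_univ, if_true]
  have hcolsupp : Colsupp (Y * Gᵀ) = σ '' Colsupp Y := by
    ext i
    simp [Colsupp, hentry, hd, Equiv.image_eq_preimage_symm]
  rw [hcolsupp, Set.ncard_image_of_injective _ σ.injective]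

end IsGenPerm

section ZeroColumn

variable {m n r : ℕ}

theorem colsupp_updateCol_zero (Y : Matrix (Fin n) (Fin r) ℂ) (j : Fin r) :
    Colsupp (Y.updateCol j 0) = Colsupp Y \ {j} := by
  ext k
  by_cases hkj : k = j <;> simp [Colsupp, hkj]

theorem SuppSub.updateCol_zero {Y : Matrix (Fin n) (Fin r) ℂ} {S : Set (Fin n × Fin r)}
    (hY : SuppSub Y S) (j : Fin r) : SuppSub (Y.updateCol j 0) S := fun i k hik => by
  refine hY i k fun hz => hik ?_
  rw [Matrix.updateCol_apply]
  split_ifs <;> simp [hz]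

theorem updateCol_zero_mem_sigmaTh {Th : Set (Set (Fin n × Fin r))} {Y : Matrix (Fin n) (Fin r) ℂ}
    (hY : Y ∈ SigmaTh Th) (j : Fin r) : Y.updateCol j 0 ∈ SigmaTh Th :=
  let ⟨S, hS, hYS⟩ := hY
  ⟨S, hS, hYS.updateCol_zero j⟩

theorem mul_transpose_updateCol_zero {X : Matrix (Fin m) (Fin r) ℂ} {j : Fin r}
    (hXj : ∀ i, X i j = 0) (Y : Matrix (Fin n) (Fin r) ℂ) :
    X * (Y.updateCol j 0)ᵀ = X * Yᵀ := by
  ext a b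
  simp only [Matrix.mul_apply]
  refine Finset.sum_congr rfl fun k _ => ?_
  by_cases hkj : k = j
  · simp [hkj, hXj]
  · simp [Matrix.updateCol_ne hkj]

end ZeroColumn

/- Zeroing a column of `Y` on which `X` vanishes keeps both `XYᵀ` and the support constraint,
but removes one nonzero column; a generalized permutation cannot do that. -/
theorem stmt6 {m n r : ℕ} (Th : Set (Set (Fin n × Fin r)))
    (X : Matrix (Fin m) (Fin r) ℂ) (Y : Matrix (Fin n) (Fin r) ℂ)
    (h : (X, Y) ∈ PSUniqueSet {p | p.1 = X ∧ p.2 ∈ SigmaTh Th}) :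
    Colsupp Y ⊆ Colsupp X := by
  intro j hjY
  by_contra hjX
  have hXj : ∀ i, X i j = 0 := fun i => by_contra fun hi => hjX ⟨i, hi⟩
  obtain ⟨G, hG, -, hY'⟩ := h.2 (X, Y.updateCol j 0)
    ⟨rfl, updateCol_zero_mem_sigmaTh h.1.2 j⟩ (mul_transpose_updateCol_zero hXj Y)
  have hcard := hG.inv.ncard_colsupp_mul_transpose Y
  rw [← hY', colsupp_updateCol_zero] at hcard
  exact (Set.ncard_sdiff_singleton_lt_of_mem hjY (Set.toFinite _)).ne hcard
end
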